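/- The Kirsch stress field satisfies the traction-free condition on the hole boundary: at r = a, the radial and shear tractions vanish, i.e., σ_rr(a, θ) = 0 and σ_rθ(a, θ) = 0 for all θ, where σ_rr = (σ11+σ22)/2 + ((σ11-σ22)/2)cos 2θ + σ12 sin 2θ and σ_rθ = -((σ11-σ22)/2) sin 2θ + σ12 cos 2θ with the Cartesian components given by the Kirsch formulas. -/
import Mathlib


/-- The Kirsch stress field is traction-free on the hole boundary:
σ_rr(a, θ) = 0 and σ_rθ(a, θ) = 0 for all θ. -/
theorem kirsch_traction_free_hole (a p : ℝ) (ha : 0 < a) :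
    let σ11 : ℝ → ℝ → ℝ := fun r θ =>
      p * (1 - a ^ 2 / r ^ 2 * (3 / 2 * Real.cos (2 * θ) + Real.cos (4 * θ)) +
        3 * a ^ 4 / (2 * r ^ 4) * Real.cos (4 * θ))
    let σ12 : ℝ → ℝ → ℝ := fun r θ =>
      p * (-(a ^ 2 / r ^ 2) * (1 / 2 * Real.sin (2 * θ) + Real.sin (4 * θ)) +
        3 * a ^ 4 / (2 * r ^ 4) * Real.sin (4 * θ))
    let σ22 : ℝ → ℝ → ℝ := fun r θ =>
      p * (-(a ^ 2 / r ^ 2) * (1 / 2 * Real.cos (2 * θ) - Real.cos (4 * θ)) -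
        3 * a ^ 4 / (2 * r ^ 4) * Real.cos (4 * θ))
    let σrr : ℝ → ℝ → ℝ := fun r θ =>
      (σ11 r θ + σ22 r θ) / 2 + (σ11 r θ - σ22 r θ) / 2 * Real.cos (2 * θ) +
        σ12 r θ * Real.sin (2 * θ)
    let σrθ : ℝ → ℝ → ℝ := fun r θ =>
      -((σ11 r θ - σ22 r θ) / 2) * Real.sin (2 * θ) + σ12 r θ * Real.cos (2 * θ)
    ∀ θ : ℝ, σrr a θ = 0 ∧ σrθ a θ = 0 := by
  intro σ11 σ12 σ22 σrr σrθ θ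
  have ha' : a ≠ 0 := ne_of_gt ha
  have h4c : Real.cos (4 * θ) = 2 * Real.cos (2 * θ) ^ 2 - 1 := by
    rw [show (4 : ℝ) * θ = 2 * (2 * θ) by ring, Real.cos_two_mul]
  have h4s : Real.sin (4 * θ) = 2 * Real.sin (2 * θ) * Real.cos (2 * θ) := by
    rw [show (4 : ℝ) * θ = 2 * (2 * θ) by ring, Real.sin_two_mul]
  have hpyth := Real.sin_sq_add_cos_sq (2 * θ)
  have h2 : a ^ 2 / a ^ 2 = 1 := div_self (pow_ne_zero 2 ha')
  have h4 : 3 * a ^ 4 / (2 * a ^ 4) = 3 / 2 := by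
    rw [div_eq_iff (by positivity)]; ring
  simp only [σrr, σrθ, σ11, σ12, σ22, h4c, h4s, h2, h4]
  refine ⟨?_, by ring⟩
  linear_combination p * (Real.cos (2 * θ) - 1 / 2) * hpyth
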